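/- Let 0 < α < β ≤ 1 and p₁, p₂ > 0 with p₁ + p₂ = 1. Then there exists a constant C > 0 such that for every n ≥ 1, every ω ∈ [0,1], and all x, y in the interior of J_n(ω): the map T_ω^n is differentiable at x and at y with strictly positive derivatives, and |log((T_ω^n)'(x)) − log((T_ω^n)'(y))| ≤ C·|T_ω^n(x) − T_ω^n(y)| ≤ C. -/

import Mathlib

noncomputable section

open Real MeasureTheory Set Filter

/-- The LSV map `T_γ` on `[0,1]`: `x(1+2^γ x^γ)` on `[0,1/2]`, `2x-1` on `(1/2,1]`. -/
noncomputable def lsv (γ : ℝ) (x : ℝ) : ℝ :=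
  if x ≤ 1 / 2 then x * (1 + 2 ^ γ * x ^ γ) else 2 * x - 1

/-- The left branch of the LSV map. -/
noncomputable def lsvLeft (γ : ℝ) (x : ℝ) : ℝ := x * (1 + 2 ^ γ * x ^ γ)

/-- The random parameter selection: `α` for `ω ∈ [0,p₁)`, `β` for `ω ∈ [p₁,1]`. -/
noncomputable def sel (α β p₁ : ℝ) (ω : ℝ) : ℝ := if ω < p₁ then α else β

/-- The randomizing map `φ` on `[0,1]`. -/
noncomputable def phiMap (p₁ p₂ : ℝ) (ω : ℝ) : ℝ :=
  if ω < p₁ then ω / p₁ else (ω - p₁) / p₂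

/-- The skew product `S(x,ω) = (T_{α(ω)}(x), φ(ω))`. -/
noncomputable def skew (α β p₁ p₂ : ℝ) (z : ℝ × ℝ) : ℝ × ℝ :=
  (lsv (sel α β p₁ z.2) z.1, phiMap p₁ p₂ z.2)

/-- Random iterates: `randIter n ω = T_ω^n = T_{α(φ^{n-1}ω)} ∘ ⋯ ∘ T_{α(ω)}`. -/
noncomputable def randIter (α β p₁ p₂ : ℝ) : ℕ → ℝ → ℝ → ℝ
  | 0, _, x => x
  | n + 1, ω, x => randIter α β p₁ p₂ n (phiMap p₁ p₂ ω) (lsv (sel α β p₁ ω) x)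

/-- The deterministic backward orbit `x_n^γ`: `x₀^γ = 1`, `x₁^γ = 1/2`, and for `n ≥ 2`,
`x_n^γ` is the (unique) point of `(0,1/2]` with `T_γ(x_n^γ) = x_{n-1}^γ`. -/
def IsDetBackOrbit (γ : ℝ) (x : ℕ → ℝ) : Prop :=
  x 0 = 1 ∧ x 1 = 1 / 2 ∧
    ∀ n, 2 ≤ n → x n ∈ Set.Ioc (0 : ℝ) (1 / 2) ∧ lsv γ (x n) = x (n - 1)

/-- The random backward orbit `x_n(ω)`: `x₀(ω) = 1`, `x₁(ω) = 1/2`, and for `n ≥ 2`,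
`x_n(ω)` is the (unique) point of `(0,1/2]` with `T_{α(ω)}(x_n(ω)) = x_{n-1}(φω)`. -/
def IsRandBackOrbit (α β p₁ p₂ : ℝ) (X : ℕ → ℝ → ℝ) : Prop :=
  (∀ ω, X 0 ω = 1) ∧ (∀ ω, X 1 ω = 1 / 2) ∧
    ∀ n, 2 ≤ n → ∀ ω, X n ω ∈ Set.Ioc (0 : ℝ) (1 / 2) ∧
      lsv (sel α β p₁ ω) (X n ω) = X (n - 1) (phiMap p₁ p₂ ω)

/-- The points `x'_n(ω)`: `x'₀(ω) = 1`, `x'₁(ω) = 3/4`, and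
`x'_n(ω) = (x_n(φω) + 1)/2` for `n ≥ 2`. -/
def IsRandBackOrbitPrime (p₁ p₂ : ℝ) (X X' : ℕ → ℝ → ℝ) : Prop :=
  (∀ ω, X' 0 ω = 1) ∧ (∀ ω, X' 1 ω = 3 / 4) ∧
    ∀ n, 2 ≤ n → ∀ ω, X' n ω = (X n (phiMap p₁ p₂ ω) + 1) / 2

/-- First return time of `(x,ω)` to `(1/2,1] × [0,1]` under the skew product. -/
noncomputable def returnTime (α β p₁ p₂ : ℝ) (x ω : ℝ) : ℕ :=
  sInf {k : ℕ | 1 ≤ k ∧ 1 / 2 < randIter α β p₁ p₂ k ω x}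


/-!
On `J_n(ω)` the map `T_ω^n` is the right branch `x ↦ 2x - 1` followed by `n - 1` left branches,
and these carry the orbit interval `[x_n(φω), x_{n-1}(φω)]` increasingly onto `[1/2, 1]`.
A left branch `T_γ` distorts any subinterval of `[b, t]` by at most `4 b^(γ-1) (t - b)`, while
pushing the pair `(b, t)` forward by `T_γ` raises its relative gap `(t - b)/b` by at least
`(α/2) b^(γ-1) (t - b)`. After `n - 1` steps the pair becomes `(1/2, 1)`, of relative gap `1`,
so the distortion terms telescope to at most `8/α`. With this bound the mean value theorem shows
that the iterate expands `[u, v] ⊆ [b, t]` by a factor comparable to `1/(t - b)`; rerunning the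
telescoping argument with this weight gives the Lipschitz bound with `C = (16/α) e^(8/α)`.
-/

def lsvLeftDeriv (γ x : ℝ) : ℝ := 1 + 2 ^ γ * (1 + γ) * x ^ γ

def relGap (b t : ℝ) : ℝ := (t - b) / b

lemma mul_sub_le_image_sub_le_mul_sub_of_monotoneOn {f f' : ℝ → ℝ} {a b : ℝ} (hab : a ≤ b)
    (hf : ∀ x ∈ Icc a b, HasDerivAt f (f' x) x) (hf' : MonotoneOn f' (Icc a b)) :
    f' a * (b - a) ≤ f b - f a ∧ f b - f a ≤ f' b * (b - a) := by
  have hcont : ContinuousOn f (Icc a b) := fun x hx => (hf x hx).continuousAt.continuousWithinAt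
  have hdiff : DifferentiableOn ℝ f (interior (Icc a b)) := fun x hx =>
    (hf x (interior_subset hx)).differentiableAt.differentiableWithinAt
  have hderiv : ∀ x ∈ interior (Icc a b), deriv f x = f' x := fun x hx =>
    (hf x (interior_subset hx)).deriv
  have ha : a ∈ Icc a b := left_mem_Icc.2 hab
  have hb : b ∈ Icc a b := right_mem_Icc.2 hab
  constructor
  · refine (convex_Icc a b).mul_sub_le_image_sub_of_le_deriv hcont hdiff (fun x hx => ?_)
      a ha b hb hab
    rw [hderiv x hx]
    exact hf' ha (interior_subset hx) (interior_subset hx).1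
  · refine (convex_Icc a b).image_sub_le_mul_sub_of_deriv_le hcont hdiff (fun x hx => ?_)
      a ha b hb hab
    rw [hderiv x hx]
    exact hf' (interior_subset hx) hb (interior_subset hx).2

lemma log_sub_log_le_sub {a b : ℝ} (ha : 1 ≤ a) (hab : a ≤ b) : log b - log a ≤ b - a := by
  have ha0 : 0 < a := by linarith
  calc log b - log a = log (b / a) := (log_div (by linarith) ha0.ne').symm
    _ ≤ b / a - 1 := log_le_sub_one_of_pos (div_pos (by linarith) ha0)
    _ = (b - a) / a := by field_simp
    _ ≤ b - a := div_le_self (by linarith) ha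

lemma rpow_sub_rpow_le_rpow_sub_one_mul {γ u v : ℝ} (hγ₀ : 0 ≤ γ) (hγ₁ : γ ≤ 1) (hu : 0 < u)
    (huv : u ≤ v) : v ^ γ - u ^ γ ≤ u ^ (γ - 1) * (v - u) := by
  set s := (v - u) / u
  have hs : 0 ≤ s := div_nonneg (by linarith) hu.le
  have hv : u * (1 + s) = v := by simp only [s]; field_simp; ring
  have hvγ : v ^ γ = u ^ γ * (1 + s) ^ γ := by rw [← hv, mul_rpow hu.le (by linarith)]
  have hbern := rpow_one_add_le_one_add_mul_self (by linarith) hγ₀ hγ₁ (s := s)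
  have hγs : γ * s ≤ s := mul_le_of_le_one_left hs hγ₁
  calc v ^ γ - u ^ γ = u ^ γ * ((1 + s) ^ γ - 1) := by rw [hvγ]; ring
    _ ≤ u ^ γ * s := by gcongr; linarith
    _ = u ^ (γ - 1) * (v - u) := by rw [rpow_sub_one hu.ne']; ring

section LeftBranch

variable {γ x u v : ℝ}

lemma lsv_of_le_half (hx : x ≤ 1 / 2) : lsv γ x = lsvLeft γ x := if_pos hx

lemma lsv_of_half_lt (hx : 1 / 2 < x) : lsv γ x = 2 * x - 1 := if_neg hx.not_ge

lemma lsvLeft_pos (hx : 0 < x) : 0 < lsvLeft γ x := by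
  unfold lsvLeft; positivity

lemma lsvLeft_half : lsvLeft γ (1 / 2) = 1 := by
  rw [lsvLeft, ← mul_rpow (by norm_num) (by norm_num)]; norm_num

lemma lsvLeft_strictMonoOn (hγ : 0 ≤ γ) : StrictMonoOn (lsvLeft γ) (Ici 0) := by
  rintro a (ha : 0 ≤ a) b (hb : 0 ≤ b) hab
  unfold lsvLeft
  calc a * (1 + 2 ^ γ * a ^ γ) ≤ a * (1 + 2 ^ γ * b ^ γ) := by gcongr
    _ < b * (1 + 2 ^ γ * b ^ γ) := by gcongr

lemma hasDerivAt_lsvLeft (hx : 0 < x) : HasDerivAt (lsvLeft γ) (lsvLeftDeriv γ x) x := by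
  have h : HasDerivAt (lsvLeft γ) (1 * (1 + 2 ^ γ * x ^ γ) + x * (2 ^ γ * (γ * x ^ (γ - 1)))) x :=
    (hasDerivAt_id' x).fun_mul
      (((hasDerivAt_rpow_const (p := γ) (Or.inl hx.ne')).const_mul (2 ^ γ)).const_add 1)
  convert h using 1
  rw [lsvLeftDeriv, rpow_sub_one hx.ne']
  field_simp
  ring

lemma one_le_lsvLeftDeriv (hγ : 0 ≤ γ) (hx : 0 ≤ x) : 1 ≤ lsvLeftDeriv γ x := by
  unfold lsvLeftDeriv
  have : 0 ≤ 2 ^ γ * (1 + γ) * x ^ γ := by positivity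
  linarith

lemma lsvLeftDeriv_monotoneOn (hγ : 0 ≤ γ) : MonotoneOn (lsvLeftDeriv γ) (Ici 0) := by
  intro u hu v _ huv
  have hu : 0 ≤ u := hu
  unfold lsvLeftDeriv
  gcongr

lemma mul_sub_le_lsvLeft_sub (hu : 0 < u) (huv : u ≤ v) (hγ : 0 ≤ γ) :
    lsvLeftDeriv γ u * (v - u) ≤ lsvLeft γ v - lsvLeft γ u :=
  (mul_sub_le_image_sub_le_mul_sub_of_monotoneOn huv
    (fun _ hx => hasDerivAt_lsvLeft (hu.trans_le hx.1))
    ((lsvLeftDeriv_monotoneOn hγ).mono fun _ hx => hu.le.trans hx.1)).1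

lemma log_lsvLeftDeriv_sub_le {b : ℝ} (hγ₀ : 0 ≤ γ) (hγ₁ : γ ≤ 1) (hb : 0 < b) (hbu : b ≤ u)
    (huv : u ≤ v) :
    log (lsvLeftDeriv γ v) - log (lsvLeftDeriv γ u) ≤ 4 * (b ^ (γ - 1) * (v - u)) := by
  have hu : 0 < u := hb.trans_le hbu
  have h2γ : (2 : ℝ) ^ γ ≤ 2 := by simpa using rpow_le_rpow_of_exponent_le one_le_two hγ₁
  have hgap := rpow_sub_rpow_le_rpow_sub_one_mul hγ₀ hγ₁ hu huv
  have hpow : u ^ (γ - 1) ≤ b ^ (γ - 1) := rpow_le_rpow_of_nonpos hb hbu (by linarith)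
  have hmono : u ^ γ ≤ v ^ γ := rpow_le_rpow hu.le huv hγ₀
  calc log (lsvLeftDeriv γ v) - log (lsvLeftDeriv γ u)
      ≤ lsvLeftDeriv γ v - lsvLeftDeriv γ u :=
        log_sub_log_le_sub (one_le_lsvLeftDeriv hγ₀ hu.le)
          (lsvLeftDeriv_monotoneOn hγ₀ hu.le (hu.le.trans huv) huv)
    _ = 2 ^ γ * (1 + γ) * (v ^ γ - u ^ γ) := by unfold lsvLeftDeriv; ring
    _ ≤ 4 * (u ^ (γ - 1) * (v - u)) := by
        gcongr
        nlinarith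
    _ ≤ 4 * (b ^ (γ - 1) * (v - u)) := by gcongr

lemma relGap_add_le_relGap_lsvLeft {b : ℝ} (hγ₀ : 0 ≤ γ) (hb : 0 < b) (hb₂ : b ≤ 1 / 2)
    (hbv : b ≤ v) :
    relGap b v + γ / 2 * (b ^ (γ - 1) * (v - b)) ≤ relGap (lsvLeft γ b) (lsvLeft γ v) := by
  have h2γ : (1 : ℝ) ≤ 2 ^ γ := one_le_rpow one_le_two hγ₀
  have hb2γ : 2 ^ γ * b ^ γ ≤ 1 := by
    rw [← mul_rpow zero_le_two hb.le]; exact rpow_le_one (by positivity) (by linarith) hγ₀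
  have hbγ : 0 ≤ b ^ γ := by positivity
  -- the derivative at `b` dominates the slope `lsvLeft γ b / b` by the factor `1 + γ/2 · b^γ`
  have hderiv : (1 + 2 ^ γ * b ^ γ) * (1 + γ / 2 * b ^ γ) ≤ lsvLeftDeriv γ b := by
    unfold lsvLeftDeriv
    have hslack : 0 ≤ 2 * 2 ^ γ - 1 - 2 ^ γ * b ^ γ := by linarith
    nlinarith [mul_nonneg (mul_nonneg hγ₀ hbγ) hslack]
  have hslope := mul_sub_le_lsvLeft_sub (γ := γ) hb hbv hγ₀
  have hgb : lsvLeft γ b = b * (1 + 2 ^ γ * b ^ γ) := rfl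
  have hfac : 0 < 1 + 2 ^ γ * b ^ γ := by positivity
  rw [relGap, relGap, rpow_sub_one hb.ne', le_div_iff₀ (lsvLeft_pos hb), hgb]
  calc ((v - b) / b + γ / 2 * (b ^ γ / b * (v - b))) * (b * (1 + 2 ^ γ * b ^ γ))
      = (1 + 2 ^ γ * b ^ γ) * (1 + γ / 2 * b ^ γ) * (v - b) := by field_simp
    _ ≤ lsvLeftDeriv γ b * (v - b) := by gcongr
    _ ≤ _ := by rw [← hgb]; exact hslope

end LeftBranch

structure IsBackOrbit {Ω : Type*} (γ : Ω → ℝ) (σ : Ω → Ω) (X : ℕ → Ω → ℝ) : Prop where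
  zero : ∀ ω, X 0 ω = 1
  pos : ∀ k ω, 0 < X (k + 1) ω
  lsvLeft_succ : ∀ k ω, lsvLeft (γ ω) (X (k + 1) ω) = X k (σ ω)

def leftIter {Ω : Type*} (γ : Ω → ℝ) (σ : Ω → Ω) : ℕ → Ω → ℝ → ℝ
  | 0, _, x => x
  | n + 1, ω, x => leftIter γ σ n (σ ω) (lsvLeft (γ ω) x)

def leftIterDeriv {Ω : Type*} (γ : Ω → ℝ) (σ : Ω → Ω) : ℕ → Ω → ℝ → ℝ
  | 0, _, _ => 1
  | n + 1, ω, x => leftIterDeriv γ σ n (σ ω) (lsvLeft (γ ω) x) * lsvLeftDeriv (γ ω) x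

section LeftIter

variable {Ω : Type*} {γ : Ω → ℝ} {σ : Ω → Ω}

lemma leftIter_pos : ∀ n ω {x}, 0 < x → 0 < leftIter γ σ n ω x
  | 0, _, _, hx => hx
  | n + 1, _, _, hx => leftIter_pos n _ (lsvLeft_pos hx)

lemma leftIter_monotoneOn (hγ : ∀ ω, 0 ≤ γ ω) :
    ∀ n ω, MonotoneOn (leftIter γ σ n ω) (Ioi 0)
  | 0, _ => monotoneOn_id
  | n + 1, ω => fun _ hu _ hv huv =>
      leftIter_monotoneOn hγ n (σ ω) (lsvLeft_pos hu) (lsvLeft_pos hv)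
        ((lsvLeft_strictMonoOn (hγ ω)).monotoneOn (mem_Ici.2 (le_of_lt hu))
          (mem_Ici.2 (le_of_lt hv)) huv)

lemma one_le_leftIterDeriv (hγ : ∀ ω, 0 ≤ γ ω) :
    ∀ n ω {x}, 0 < x → 1 ≤ leftIterDeriv γ σ n ω x
  | 0, _, _, _ => le_rfl
  | n + 1, ω, _, hx =>
      one_le_mul_of_one_le_of_one_le (one_le_leftIterDeriv hγ n _ (lsvLeft_pos hx))
        (one_le_lsvLeftDeriv (hγ ω) hx.le)

lemma leftIterDeriv_monotoneOn (hγ : ∀ ω, 0 ≤ γ ω) :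
    ∀ n ω, MonotoneOn (leftIterDeriv γ σ n ω) (Ioi 0)
  | 0, _ => fun _ _ _ _ _ => le_rfl
  | n + 1, ω => fun u hu v hv huv => by
      have hu' : u ∈ Ici 0 := mem_Ici.2 (le_of_lt hu)
      have hv' : v ∈ Ici 0 := mem_Ici.2 (le_of_lt hv)
      exact mul_le_mul
        (leftIterDeriv_monotoneOn hγ n (σ ω) (lsvLeft_pos hu) (lsvLeft_pos hv)
          ((lsvLeft_strictMonoOn (hγ ω)).monotoneOn hu' hv' huv))
        (lsvLeftDeriv_monotoneOn (hγ ω) hu' hv' huv)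
        (by linarith [one_le_lsvLeftDeriv (hγ ω) hu'])
        (by linarith [one_le_leftIterDeriv hγ n (σ ω) (lsvLeft_pos (γ := γ ω) hv) (σ := σ)])

lemma hasDerivAt_leftIter :
    ∀ n ω {x}, 0 < x → HasDerivAt (leftIter γ σ n ω) (leftIterDeriv γ σ n ω x) x
  | 0, _, x, _ => hasDerivAt_id x
  | n + 1, ω, _, hx =>
      (hasDerivAt_leftIter n (σ ω) (lsvLeft_pos hx)).comp _ (hasDerivAt_lsvLeft hx)

lemma log_leftIterDeriv_succ (hγ : ∀ ω, 0 ≤ γ ω) (n : ℕ) (ω : Ω) {x : ℝ} (hx : 0 < x) :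
    log (leftIterDeriv γ σ (n + 1) ω x) =
      log (leftIterDeriv γ σ n (σ ω) (lsvLeft (γ ω) x)) + log (lsvLeftDeriv (γ ω) x) :=
  log_mul (by linarith [one_le_leftIterDeriv hγ n (σ ω) (lsvLeft_pos (γ := γ ω) hx) (σ := σ)])
    (by linarith [one_le_lsvLeftDeriv (hγ ω) hx.le])

end LeftIter

namespace IsBackOrbit

variable {Ω : Type*} {γ : Ω → ℝ} {σ : Ω → Ω} {X : ℕ → Ω → ℝ}

lemma one (hX : IsBackOrbit γ σ X) (hγ : ∀ ω, 0 ≤ γ ω) (ω : Ω) : X 1 ω = 1 / 2 :=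
  (lsvLeft_strictMonoOn (hγ ω)).injOn (mem_Ici.2 (hX.pos 0 ω).le) (mem_Ici.2 (by norm_num))
    (by rw [hX.lsvLeft_succ, hX.zero, lsvLeft_half])

lemma succ_lt (hX : IsBackOrbit γ σ X) (hγ : ∀ ω, 0 ≤ γ ω) : ∀ k ω, X (k + 1) ω < X k ω
  | 0, ω => by rw [hX.one hγ, hX.zero]; norm_num
  | k + 1, ω => by
      refine ((lsvLeft_strictMonoOn (hγ ω)).lt_iff_lt (mem_Ici.2 (hX.pos _ ω).le)
        (mem_Ici.2 (hX.pos _ ω).le)).1 ?_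
      rw [hX.lsvLeft_succ, hX.lsvLeft_succ]
      exact hX.succ_lt hγ k (σ ω)

lemma succ_le_half (hX : IsBackOrbit γ σ X) (hγ : ∀ ω, 0 ≤ γ ω) : ∀ k ω, X (k + 1) ω ≤ 1 / 2
  | 0, ω => (hX.one hγ ω).le
  | k + 1, ω => ((hX.succ_lt hγ (k + 1) ω).trans_le (hX.succ_le_half hγ k ω)).le

lemma lsvLeft_mem_Icc (hX : IsBackOrbit γ σ X) (hγ : ∀ ω, 0 ≤ γ ω) {k : ℕ} {ω : Ω} {u : ℝ}
    (hu : u ∈ Icc (X (k + 2) ω) (X (k + 1) ω)) :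
    lsvLeft (γ ω) u ∈ Icc (X (k + 1) (σ ω)) (X k (σ ω)) := by
  have hmono := (lsvLeft_strictMonoOn (hγ ω)).monotoneOn
  have hb : X (k + 2) ω ∈ Ici 0 := mem_Ici.2 (hX.pos _ ω).le
  have hu₀ : u ∈ Ici 0 := mem_Ici.2 (hb.trans hu.1)
  rw [← hX.lsvLeft_succ, ← hX.lsvLeft_succ]
  exact ⟨hmono hb hu₀ hu.1, hmono hu₀ (mem_Ici.2 (hu₀.trans hu.2)) hu.2⟩

lemma leftIter_succ_self (hX : IsBackOrbit γ σ X) (hγ : ∀ ω, 0 ≤ γ ω) :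
    ∀ k ω, leftIter γ σ k ω (X (k + 1) ω) = 1 / 2
  | 0, ω => hX.one hγ ω
  | k + 1, ω => by rw [leftIter, hX.lsvLeft_succ]; exact hX.leftIter_succ_self hγ k (σ ω)

lemma leftIter_self (hX : IsBackOrbit γ σ X) : ∀ k ω, leftIter γ σ k ω (X k ω) = 1
  | 0, ω => hX.zero ω
  | k + 1, ω => by rw [leftIter, hX.lsvLeft_succ]; exact hX.leftIter_self k (σ ω)

lemma leftIter_mem_Icc (hX : IsBackOrbit γ σ X) (hγ : ∀ ω, 0 ≤ γ ω) {k : ℕ} {ω : Ω} {u : ℝ}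
    (hu : u ∈ Icc (X (k + 1) ω) (X k ω)) : leftIter γ σ k ω u ∈ Icc (1 / 2) 1 := by
  have hb : X (k + 1) ω ∈ Ioi 0 := hX.pos k ω
  have hu₀ : u ∈ Ioi 0 := lt_of_lt_of_le hb hu.1
  rw [← hX.leftIter_succ_self hγ k ω, ← hX.leftIter_self k ω]
  exact ⟨leftIter_monotoneOn hγ k ω hb hu₀ hu.1,
    leftIter_monotoneOn hγ k ω hu₀ (lt_of_lt_of_le hu₀ hu.2) hu.2⟩

lemma relGap_nonneg (hX : IsBackOrbit γ σ X) (hγ : ∀ ω, 0 ≤ γ ω) (k : ℕ) (ω : Ω) :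
    0 ≤ relGap (X (k + 1) ω) (X k ω) :=
  div_nonneg (sub_nonneg.2 (hX.succ_lt hγ k ω).le) (hX.pos k ω).le

lemma relGap_zero (hX : IsBackOrbit γ σ X) (hγ : ∀ ω, 0 ≤ γ ω) (ω : Ω) :
    relGap (X 1 ω) (X 0 ω) = 1 := by
  rw [relGap, hX.one hγ, hX.zero]; norm_num

/-- The relative gap of the orbit grows along `σ` by at least `α/2` times the step's
distortion term; since it stays in `[0, 1]`, these terms are summable along any orbit. -/
lemma relGap_succ_add_le {α : ℝ} (hα : 0 ≤ α) (hγ : ∀ ω, α ≤ γ ω) (hX : IsBackOrbit γ σ X)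
    (k : ℕ) (ω : Ω) :
    relGap (X (k + 2) ω) (X (k + 1) ω) +
        α / 2 * (X (k + 2) ω ^ (γ ω - 1) * (X (k + 1) ω - X (k + 2) ω)) ≤
      relGap (X (k + 1) (σ ω)) (X k (σ ω)) := by
  have hγ₀ : ∀ ω, 0 ≤ γ ω := fun ω => hα.trans (hγ ω)
  have hb := hX.pos (k + 1) ω
  have hbt := (hX.succ_lt hγ₀ (k + 1) ω).le
  have hQ : 0 ≤ X (k + 2) ω ^ (γ ω - 1) * (X (k + 1) ω - X (k + 2) ω) :=
    mul_nonneg (by positivity) (by linarith)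
  have h := relGap_add_le_relGap_lsvLeft (hγ₀ ω) hb (hX.succ_le_half hγ₀ (k + 1) ω) hbt
  rw [hX.lsvLeft_succ, hX.lsvLeft_succ] at h
  nlinarith [hγ ω]

end IsBackOrbit

namespace IsBackOrbit

variable {Ω : Type*} {γ : Ω → ℝ} {σ : Ω → Ω} {X : ℕ → Ω → ℝ} {α : ℝ}

lemma log_leftIterDeriv_sub_le (hα : 0 < α) (hγ : ∀ ω, γ ω ∈ Icc α 1)
    (hX : IsBackOrbit γ σ X) :
    ∀ k ω {u v : ℝ}, X (k + 1) ω ≤ u → u ≤ v → v ≤ X k ω →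
      log (leftIterDeriv γ σ k ω v) - log (leftIterDeriv γ σ k ω u) ≤
        8 / α * (1 - relGap (X (k + 1) ω) (X k ω))
  | 0, ω, _, _, _, _, _ => by
      have hγ₀ : ∀ ω, 0 ≤ γ ω := fun ω => hα.le.trans (hγ ω).1
      simp [leftIterDeriv, hX.relGap_zero hγ₀]
  | k + 1, ω, u, v, hu, huv, hv => by
      have hγ₀ : ∀ ω, 0 ≤ γ ω := fun ω => hα.le.trans (hγ ω).1
      have hgrow := relGap_succ_add_le hα.le (fun ω => (hγ ω).1) hX k ω
      set b := X (k + 2) ω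
      set t := X (k + 1) ω
      have hb : 0 < b := hX.pos (k + 1) ω
      have hu₀ : 0 < u := hb.trans_le hu
      have hstep : log (lsvLeftDeriv (γ ω) v) - log (lsvLeftDeriv (γ ω) u) ≤
          4 * (b ^ (γ ω - 1) * (t - b)) :=
        (log_lsvLeftDeriv_sub_le (hγ₀ ω) (hγ ω).2 hb hu huv).trans (by gcongr)
      have hrest := log_leftIterDeriv_sub_le hα hγ hX k (σ ω)
        (hX.lsvLeft_mem_Icc hγ₀ ⟨hu, huv.trans hv⟩).1
        ((lsvLeft_strictMonoOn (hγ₀ ω)).monotoneOn (mem_Ici.2 hu₀.le)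
          (mem_Ici.2 (hu₀.le.trans huv)) huv)
        (hX.lsvLeft_mem_Icc hγ₀ ⟨hu.trans huv, hv⟩).2
      rw [log_leftIterDeriv_succ hγ₀ k ω (hu₀.trans_le huv), log_leftIterDeriv_succ hγ₀ k ω hu₀]
      calc _ ≤ 8 / α * (1 - relGap (X (k + 1) (σ ω)) (X k (σ ω))) +
              4 * (b ^ (γ ω - 1) * (t - b)) := by linarith
        _ = 8 / α * (1 - (relGap (X (k + 1) (σ ω)) (X k (σ ω)) -
              α / 2 * (b ^ (γ ω - 1) * (t - b)))) := by field_simp; ring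
        _ ≤ 8 / α * (1 - relGap b t) := by gcongr; linarith

lemma leftIterDeriv_le_exp_mul (hα : 0 < α) (hγ : ∀ ω, γ ω ∈ Icc α 1) (hX : IsBackOrbit γ σ X)
    {k : ℕ} {ω : Ω} {u v : ℝ} (hu : X (k + 1) ω ≤ u) (huv : u ≤ v) (hv : v ≤ X k ω) :
    leftIterDeriv γ σ k ω v ≤ exp (8 / α) * leftIterDeriv γ σ k ω u := by
  have hγ₀ : ∀ ω, 0 ≤ γ ω := fun ω => hα.le.trans (hγ ω).1
  have hu₀ : 0 < u := (hX.pos k ω).trans_le hu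
  have hDu := one_le_leftIterDeriv hγ₀ k ω hu₀ (σ := σ)
  have hDv := one_le_leftIterDeriv hγ₀ k ω (hu₀.trans_le huv) (σ := σ)
  have hlog := hX.log_leftIterDeriv_sub_le hα hγ k ω hu huv hv
  have hρ := hX.relGap_nonneg hγ₀ k ω
  rw [← log_le_log_iff (by linarith) (by positivity), log_mul (by positivity) (by linarith),
    log_exp]
  nlinarith [div_pos (by norm_num : (0 : ℝ) < 8) hα]

/-- Mean value theorem on `[u, v]` and on `[X (k + 1) ω, X k ω]`, whose image has length `1/2`,
compared through bounded distortion. -/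
lemma sub_le_mul_leftIter_sub (hα : 0 < α) (hγ : ∀ ω, γ ω ∈ Icc α 1) (hX : IsBackOrbit γ σ X)
    {k : ℕ} {ω : Ω} {u v : ℝ} (hu : X (k + 1) ω ≤ u) (huv : u ≤ v) (hv : v ≤ X k ω) :
    v - u ≤ 2 * exp (8 / α) * (X k ω - X (k + 1) ω) *
      (leftIter γ σ k ω v - leftIter γ σ k ω u) := by
  have hγ₀ : ∀ ω, 0 ≤ γ ω := fun ω => hα.le.trans (hγ ω).1
  set b := X (k + 1) ω
  set t := X k ω
  set D := leftIterDeriv γ σ k ω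
  have hb : 0 < b := hX.pos k ω
  have hderiv : ∀ {a c : ℝ}, 0 < a → ∀ x ∈ Icc a c, HasDerivAt (leftIter γ σ k ω) (D x) x :=
    fun ha x hx => hasDerivAt_leftIter k ω (ha.trans_le hx.1)
  have hmono : ∀ {a c : ℝ}, 0 < a → MonotoneOn D (Icc a c) :=
    fun ha => (leftIterDeriv_monotoneOn hγ₀ k ω).mono fun x hx => ha.trans_le hx.1
  have hbt : 1 / 2 ≤ D t * (t - b) := by
    have h := (mul_sub_le_image_sub_le_mul_sub_of_monotoneOn (hu.trans (huv.trans hv))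
      (hderiv hb) (hmono hb)).2
    rwa [hX.leftIter_self, hX.leftIter_succ_self hγ₀, show (1 : ℝ) - 1 / 2 = 1 / 2 by norm_num] at h
  have huv' := (mul_sub_le_image_sub_le_mul_sub_of_monotoneOn huv (hderiv (hb.trans_le hu))
    (hmono (hb.trans_le hu))).1
  have hDt := hX.leftIterDeriv_le_exp_mul hα hγ hu (huv.trans hv) le_rfl
  have htb : 0 ≤ t - b := by linarith [hu.trans (huv.trans hv)]
  calc v - u ≤ 2 * (D t * (t - b)) * (v - u) := by nlinarith
    _ ≤ 2 * (exp (8 / α) * D u * (t - b)) * (v - u) := by gcongr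
    _ = 2 * exp (8 / α) * (t - b) * (D u * (v - u)) := by ring
    _ ≤ _ := by gcongr

end IsBackOrbit

namespace IsBackOrbit

variable {Ω : Type*} {γ : Ω → ℝ} {σ : Ω → Ω} {X : ℕ → Ω → ℝ} {α : ℝ}

lemma log_leftIterDeriv_sub_le_mul (hα : 0 < α) (hγ : ∀ ω, γ ω ∈ Icc α 1)
    (hX : IsBackOrbit γ σ X) :
    ∀ k ω {u v : ℝ}, X (k + 1) ω ≤ u → u ≤ v → v ≤ X k ω →
      log (leftIterDeriv γ σ k ω v) - log (leftIterDeriv γ σ k ω u) ≤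
        16 / α * exp (8 / α) * ((1 - relGap (X (k + 1) ω) (X k ω)) *
          (leftIter γ σ k ω v - leftIter γ σ k ω u))
  | 0, ω, _, _, _, _, _ => by
      have hγ₀ : ∀ ω, 0 ≤ γ ω := fun ω => hα.le.trans (hγ ω).1
      simp [leftIterDeriv, hX.relGap_zero hγ₀]
  | k + 1, ω, u, v, hu, huv, hv => by
      have hγ₀ : ∀ ω, 0 ≤ γ ω := fun ω => hα.le.trans (hγ ω).1
      have hgrow := relGap_succ_add_le hα.le (fun ω => (hγ ω).1) hX k ω
      have hgap := hX.sub_le_mul_leftIter_sub hα hγ hu huv hv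
      set b := X (k + 2) ω
      set t := X (k + 1) ω
      set Δ := leftIter γ σ (k + 1) ω v - leftIter γ σ (k + 1) ω u
      have hb : 0 < b := hX.pos (k + 1) ω
      have hu₀ : 0 < u := hb.trans_le hu
      have hΔ : 0 ≤ Δ := sub_nonneg.2 (leftIter_monotoneOn hγ₀ (k + 1) ω hu₀ (hu₀.trans_le huv) huv)
      have hstep : log (lsvLeftDeriv (γ ω) v) - log (lsvLeftDeriv (γ ω) u) ≤
          8 * exp (8 / α) * (b ^ (γ ω - 1) * (t - b)) * Δ :=
        calc _ ≤ 4 * (b ^ (γ ω - 1) * (v - u)) :=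
              log_lsvLeftDeriv_sub_le (hγ₀ ω) (hγ ω).2 hb hu huv
          _ ≤ 4 * (b ^ (γ ω - 1) * (2 * exp (8 / α) * (t - b) * Δ)) := by gcongr
          _ = _ := by ring
      have hrest := log_leftIterDeriv_sub_le_mul hα hγ hX k (σ ω)
        (hX.lsvLeft_mem_Icc hγ₀ ⟨hu, huv.trans hv⟩).1
        ((lsvLeft_strictMonoOn (hγ₀ ω)).monotoneOn (mem_Ici.2 hu₀.le)
          (mem_Ici.2 (hu₀.le.trans huv)) huv)
        (hX.lsvLeft_mem_Icc hγ₀ ⟨hu.trans huv, hv⟩).2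
      rw [log_leftIterDeriv_succ hγ₀ k ω (hu₀.trans_le huv), log_leftIterDeriv_succ hγ₀ k ω hu₀]
      calc _ ≤ 16 / α * exp (8 / α) * ((1 - relGap (X (k + 1) (σ ω)) (X k (σ ω))) * Δ) +
              8 * exp (8 / α) * (b ^ (γ ω - 1) * (t - b)) * Δ := by
            rw [show leftIter γ σ k (σ ω) (lsvLeft (γ ω) v) -
              leftIter γ σ k (σ ω) (lsvLeft (γ ω) u) = Δ from rfl] at hrest
            linarith
        _ = 16 / α * exp (8 / α) * ((1 - (relGap (X (k + 1) (σ ω)) (X k (σ ω)) -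
              α / 2 * (b ^ (γ ω - 1) * (t - b)))) * Δ) := by field_simp; ring
        _ ≤ 16 / α * exp (8 / α) * ((1 - relGap b t) * Δ) := by gcongr; linarith

lemma abs_log_leftIterDeriv_sub_le (hα : 0 < α) (hγ : ∀ ω, γ ω ∈ Icc α 1)
    (hX : IsBackOrbit γ σ X) {k : ℕ} {ω : Ω} {u v : ℝ} (hu : u ∈ Icc (X (k + 1) ω) (X k ω))
    (hv : v ∈ Icc (X (k + 1) ω) (X k ω)) :
    |log (leftIterDeriv γ σ k ω u) - log (leftIterDeriv γ σ k ω v)| ≤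
      16 / α * exp (8 / α) * |leftIter γ σ k ω u - leftIter γ σ k ω v| := by
  wlog huv : u ≤ v generalizing u v
  · rw [abs_sub_comm, abs_sub_comm (leftIter γ σ k ω u)]
    exact this hv hu (le_of_not_ge huv)
  have hγ₀ : ∀ ω, 0 ≤ γ ω := fun ω => hα.le.trans (hγ ω).1
  have hu₀ : 0 < u := (hX.pos k ω).trans_le hu.1
  have hDu := one_le_leftIterDeriv hγ₀ k ω hu₀ (σ := σ)
  have hlog : log (leftIterDeriv γ σ k ω u) ≤ log (leftIterDeriv γ σ k ω v) :=
    log_le_log (by linarith) (leftIterDeriv_monotoneOn hγ₀ k ω hu₀ (hu₀.trans_le huv) huv)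
  have hG : leftIter γ σ k ω u ≤ leftIter γ σ k ω v :=
    leftIter_monotoneOn hγ₀ k ω hu₀ (hu₀.trans_le huv) huv
  have hmain := hX.log_leftIterDeriv_sub_le_mul hα hγ k ω hu.1 huv hv.2
  have hρ := hX.relGap_nonneg hγ₀ k ω
  rw [abs_sub_comm, abs_of_nonneg (by linarith), abs_sub_comm, abs_of_nonneg (by linarith)]
  refine hmain.trans (mul_le_mul_of_nonneg_left ?_ (by positivity))
  nlinarith

end IsBackOrbit

section Random

variable {α β p₁ p₂ : ℝ} {X X' : ℕ → ℝ → ℝ}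

lemma sel_mem_Icc (hαβ : α ≤ β) (hβ : β ≤ 1) (ω : ℝ) : sel α β p₁ ω ∈ Icc α 1 := by
  unfold sel; split_ifs <;> constructor <;> linarith

lemma IsRandBackOrbit.isBackOrbit (hX : IsRandBackOrbit α β p₁ p₂ X) :
    IsBackOrbit (sel α β p₁) (phiMap p₁ p₂) X where
  zero := hX.1
  pos
    | 0, ω => by rw [hX.2.1]; norm_num
    | k + 1, ω => (hX.2.2 (k + 2) (by omega) ω).1.1
  lsvLeft_succ
    | 0, ω => by rw [hX.2.1, lsvLeft_half, hX.1]
    | k + 1, ω => by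
      obtain ⟨hmem, h⟩ := hX.2.2 (k + 2) (by omega) ω
      rwa [← lsv_of_le_half hmem.2]

lemma IsRandBackOrbitPrime.eq_add_one_div_two (hX : IsRandBackOrbit α β p₁ p₂ X)
    (hX' : IsRandBackOrbitPrime p₁ p₂ X X') : ∀ n ω, X' n ω = (X n (phiMap p₁ p₂ ω) + 1) / 2
  | 0, ω => by rw [hX'.1, hX.1]; norm_num
  | 1, ω => by rw [hX'.2.1, hX.2.1]; norm_num
  | n + 2, ω => hX'.2.2 (n + 2) (by omega) ω

lemma IsRandBackOrbitPrime.two_mul_sub_one_mem (hX : IsRandBackOrbit α β p₁ p₂ X)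
    (hX' : IsRandBackOrbitPrime p₁ p₂ X X') {k : ℕ} {ω x : ℝ}
    (hx : x ∈ Ioo (X' (k + 1) ω) (X' k ω)) :
    2 * x - 1 ∈ Ioo (X (k + 1) (phiMap p₁ p₂ ω)) (X k (phiMap p₁ p₂ ω)) := by
  rw [hX'.eq_add_one_div_two hX, hX'.eq_add_one_div_two hX] at hx
  constructor <;> linarith [hx.1, hx.2]

lemma IsBackOrbit.randIter_eq_leftIter (hγ : ∀ ω, 0 ≤ sel α β p₁ ω)
    (hX : IsBackOrbit (sel α β p₁) (phiMap p₁ p₂) X) :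
    ∀ k ω {z}, z ∈ Icc (X (k + 1) ω) (X k ω) →
      randIter α β p₁ p₂ k ω z = leftIter (sel α β p₁) (phiMap p₁ p₂) k ω z
  | 0, _, _, _ => rfl
  | k + 1, ω, _, hz => by
      rw [randIter, leftIter, lsv_of_le_half (hz.2.trans (hX.succ_le_half hγ k ω))]
      exact hX.randIter_eq_leftIter hγ k (phiMap p₁ p₂ ω) (hX.lsvLeft_mem_Icc hγ hz)

lemma IsBackOrbit.randIter_succ_eq_leftIter (hγ : ∀ ω, 0 ≤ sel α β p₁ ω)
    (hX : IsBackOrbit (sel α β p₁) (phiMap p₁ p₂) X) {k : ℕ} {ω z : ℝ}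
    (hz : 2 * z - 1 ∈ Icc (X (k + 1) (phiMap p₁ p₂ ω)) (X k (phiMap p₁ p₂ ω))) :
    randIter α β p₁ p₂ (k + 1) ω z =
      leftIter (sel α β p₁) (phiMap p₁ p₂) k (phiMap p₁ p₂ ω) (2 * z - 1) := by
  have hz₀ : 0 < 2 * z - 1 := (hX.pos k _).trans_le hz.1
  rw [randIter, lsv_of_half_lt (by linarith)]
  exact hX.randIter_eq_leftIter hγ k _ hz

lemma IsBackOrbit.hasDerivAt_randIter_succ (hγ : ∀ ω, 0 ≤ sel α β p₁ ω)
    (hX : IsBackOrbit (sel α β p₁) (phiMap p₁ p₂) X) {k : ℕ} {ω z : ℝ}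
    (hz : 2 * z - 1 ∈ Ioo (X (k + 1) (phiMap p₁ p₂ ω)) (X k (phiMap p₁ p₂ ω))) :
    HasDerivAt (randIter α β p₁ p₂ (k + 1) ω)
      (2 * leftIterDeriv (sel α β p₁) (phiMap p₁ p₂) k (phiMap p₁ p₂ ω) (2 * z - 1)) z := by
  have hopen : IsOpen ((fun w : ℝ => 2 * w - 1) ⁻¹'
      Ioo (X (k + 1) (phiMap p₁ p₂ ω)) (X k (phiMap p₁ p₂ ω))) :=
    isOpen_Ioo.preimage (by fun_prop)
  have hEq : (fun w => leftIter (sel α β p₁) (phiMap p₁ p₂) k (phiMap p₁ p₂ ω) (2 * w - 1))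
      =ᶠ[nhds z] randIter α β p₁ p₂ (k + 1) ω :=
    Filter.eventually_of_mem (hopen.mem_nhds hz) fun w hw =>
      (hX.randIter_succ_eq_leftIter hγ (Ioo_subset_Icc_self hw)).symm
  have haff : HasDerivAt (fun w : ℝ => 2 * w - 1) 2 z := by
    simpa using ((hasDerivAt_id z).const_mul (2 : ℝ)).sub_const 1
  rw [mul_comm]
  exact ((hasDerivAt_leftIter k _ ((hX.pos k _).trans hz.1)).comp z haff).congr_of_eventuallyEq
    hEq.symm

end Random

theorem log_distortion_general (α β p₁ p₂ : ℝ) (hα : 0 < α) (hαβ : α < β) (hβ : β ≤ 1)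
    (X X' : ℕ → ℝ → ℝ) (hX : IsRandBackOrbit α β p₁ p₂ X)
    (hX' : IsRandBackOrbitPrime p₁ p₂ X X') :
    ∃ C : ℝ, 0 < C ∧ ∀ n : ℕ, 1 ≤ n → ∀ ω ∈ Set.Icc (0 : ℝ) 1,
      ∀ x ∈ Set.Ioo (X' n ω) (X' (n - 1) ω), ∀ y ∈ Set.Ioo (X' n ω) (X' (n - 1) ω),
        DifferentiableAt ℝ (randIter α β p₁ p₂ n ω) x ∧
        DifferentiableAt ℝ (randIter α β p₁ p₂ n ω) y ∧
        0 < deriv (randIter α β p₁ p₂ n ω) x ∧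
        0 < deriv (randIter α β p₁ p₂ n ω) y ∧
        |Real.log (deriv (randIter α β p₁ p₂ n ω) x) -
            Real.log (deriv (randIter α β p₁ p₂ n ω) y)| ≤
          C * |randIter α β p₁ p₂ n ω x - randIter α β p₁ p₂ n ω y| ∧
        C * |randIter α β p₁ p₂ n ω x - randIter α β p₁ p₂ n ω y| ≤ C := by
  have hγ : ∀ ω, sel α β p₁ ω ∈ Icc α 1 := sel_mem_Icc hαβ.le hβ
  have hγ₀ : ∀ ω, 0 ≤ sel α β p₁ ω := fun ω => hα.le.trans (hγ ω).1
  have hB := hX.isBackOrbit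
  refine ⟨16 / α * exp (8 / α), by positivity, fun n hn ω _ x hx y hy => ?_⟩
  obtain ⟨k, rfl⟩ : ∃ k, n = k + 1 := ⟨n - 1, by omega⟩
  rw [Nat.add_sub_cancel] at hx hy
  replace hx := hX'.two_mul_sub_one_mem hX hx
  replace hy := hX'.two_mul_sub_one_mem hX hy
  have hDx := one_le_leftIterDeriv (σ := phiMap p₁ p₂) hγ₀ k (phiMap p₁ p₂ ω)
    (hB.pos k _ |>.trans hx.1)
  have hDy := one_le_leftIterDeriv (σ := phiMap p₁ p₂) hγ₀ k (phiMap p₁ p₂ ω)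
    (hB.pos k _ |>.trans hy.1)
  have hGx := hB.leftIter_mem_Icc hγ₀ (Ioo_subset_Icc_self hx)
  have hGy := hB.leftIter_mem_Icc hγ₀ (Ioo_subset_Icc_self hy)
  have hdx := hB.hasDerivAt_randIter_succ hγ₀ hx
  have hdy := hB.hasDerivAt_randIter_succ hγ₀ hy
  rw [hdx.deriv, hdy.deriv, hB.randIter_succ_eq_leftIter hγ₀ (Ioo_subset_Icc_self hx),
    hB.randIter_succ_eq_leftIter hγ₀ (Ioo_subset_Icc_self hy),
    log_mul two_ne_zero (by positivity), log_mul two_ne_zero (by positivity),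
    add_sub_add_left_eq_sub]
  refine ⟨hdx.differentiableAt, hdy.differentiableAt, by positivity, by positivity,
    hB.abs_log_leftIterDeriv_sub_le hα hγ (Ioo_subset_Icc_self hx) (Ioo_subset_Icc_self hy), ?_⟩
  exact mul_le_of_le_one_right (by positivity)
    (abs_sub_le_iff.2 ⟨by linarith [hGx.2, hGy.1], by linarith [hGx.1, hGy.2]⟩)

/-- For `0 < α < β ≤ 1` and `p₁, p₂ > 0` with `p₁ + p₂ = 1`, there is
`C > 0` such that for every `n ≥ 1`, `ω ∈ [0,1]`, and `x, y` in the interior of `J_n(ω)`,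
the map `T_ω^n` is differentiable at `x` and `y` with positive derivatives and
`|log (T_ω^n)'(x) − log (T_ω^n)'(y)| ≤ C·|T_ω^n(x) − T_ω^n(y)| ≤ C`. -/
theorem log_distortion (α β p₁ p₂ : ℝ) (hα : 0 < α) (hαβ : α < β) (hβ : β ≤ 1)
    (hp₁ : 0 < p₁) (hp₂ : 0 < p₂) (hp : p₁ + p₂ = 1)
    (X X' : ℕ → ℝ → ℝ) (hX : IsRandBackOrbit α β p₁ p₂ X)
    (hX' : IsRandBackOrbitPrime p₁ p₂ X X') :
    ∃ C : ℝ, 0 < C ∧ ∀ n : ℕ, 1 ≤ n → ∀ ω ∈ Set.Icc (0 : ℝ) 1,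
      ∀ x ∈ Set.Ioo (X' n ω) (X' (n - 1) ω), ∀ y ∈ Set.Ioo (X' n ω) (X' (n - 1) ω),
        DifferentiableAt ℝ (randIter α β p₁ p₂ n ω) x ∧
        DifferentiableAt ℝ (randIter α β p₁ p₂ n ω) y ∧
        0 < deriv (randIter α β p₁ p₂ n ω) x ∧
        0 < deriv (randIter α β p₁ p₂ n ω) y ∧
        |Real.log (deriv (randIter α β p₁ p₂ n ω) x) -
            Real.log (deriv (randIter α β p₁ p₂ n ω) y)| ≤
          C * |randIter α β p₁ p₂ n ω x - randIter α β p₁ p₂ n ω y| ∧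
        C * |randIter α β p₁ p₂ n ω x - randIter α β p₁ p₂ n ω y| ≤ C :=
  log_distortion_general α β p₁ p₂ hα hαβ hβ X X' hX hX'
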